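/- Let ∅ ≠ C ⊆ ℝⁿ \ {0} be compact. If for every affinely independent family x₁,…,x_k ∈ C (k ≥ 1) and all α₁,…,α_k > 0 one has α₁x₁ + … + α_k x_k ≠ 0, then there exists u₀ ∈ ℝⁿ with ⟨x, u₀⟩ > 0 for all x ∈ C. -/

import Mathlib

open Set
open scoped RealInnerProductSpace

/-- `rho Φ x = x / Φ x` (equal to `0` when `Φ x = 0`, in particular `rho Φ 0 = 0`). -/
noncomputable def rho {n : ℕ} (Φ : EuclideanSpace ℝ (Fin n) → ℝ)
    (x : EuclideanSpace ℝ (Fin n)) : EuclideanSpace ℝ (Fin n) := (Φ x)⁻¹ • x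

/-- The `Φ`-sphere `S_Φ = {x | Φ x = 1}`. -/
def sphereSet {n : ℕ} (Φ : EuclideanSpace ℝ (Fin n) → ℝ) : Set (EuclideanSpace ℝ (Fin n)) :=
  {x | Φ x = 1}

/-- `S` is s-convex: `ρ(λx + (1-λ)y) ∈ S` for all `x, y ∈ S`, `λ ∈ [0,1]`. -/
def SConvex {n : ℕ} (Φ : EuclideanSpace ℝ (Fin n) → ℝ)
    (S : Set (EuclideanSpace ℝ (Fin n))) : Prop :=
  ∀ x ∈ S, ∀ y ∈ S, ∀ l : ℝ, l ∈ Set.Icc (0 : ℝ) 1 → rho Φ (l • x + (1 - l) • y) ∈ S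

/-!
By Carathéodory, every point of `convexHull ℝ C` is a positive convex combination of affinely
independent points of `C`, so the hypothesis says exactly that `0 ∉ convexHull ℝ C`. In finite
dimension the convex hull of a compact set is compact (Carathéodory again: it is a finite union of
continuous images of `stdSimplex × Cᵏ`), so Hahn–Banach strictly separates `0` from it, and the
Riesz representation turns the separating functional into the vector `u₀`.
-/

open Module

section ConvexCombinations

variable {E : Type*} [AddCommGroup E] [Module ℝ E]

def convexCombinations (k : ℕ) (s : Set E) : Set E :=
  (fun p : (Fin k → ℝ) × (Fin k → E) ↦ ∑ i, p.1 i • p.2 i) ''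
    (stdSimplex ℝ (Fin k) ×ˢ univ.pi fun _ ↦ s)

theorem convexCombinations_subset_convexHull (k : ℕ) (s : Set E) :
    convexCombinations k s ⊆ convexHull ℝ s := by
  rintro _ ⟨⟨w, z⟩, ⟨⟨hw₀, hw₁⟩, hz⟩, rfl⟩
  exact mem_convexHull_of_exists_fintype w z hw₀ hw₁ (fun i ↦ hz i (mem_univ i)) rfl

/-- Carathéodory: affinely independent families in `E` have at most `finrank ℝ E + 1` points. -/
theorem convexHull_eq_iUnion_convexCombinations [FiniteDimensional ℝ E] (s : Set E) :
    convexHull ℝ s = ⋃ k : Fin (finrank ℝ E + 2), convexCombinations k s := by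
  refine subset_antisymm (fun x hx ↦ ?_)
    (iUnion_subset fun k ↦ convexCombinations_subset_convexHull k s)
  obtain ⟨ι, _, z, w, hzs, hz, hw₀, hw₁, rfl⟩ := eq_pos_convex_span_of_mem_convexHull hx
  have hcard : Fintype.card ι < finrank ℝ E + 2 :=
    Nat.lt_succ_of_le <| hz.card_le_finrank_succ.trans <| Nat.succ_le_succ (Submodule.finrank_le _)
  let e := (Fintype.equivFin ι).symm
  refine mem_iUnion.2 ⟨⟨_, hcard⟩, ⟨w ∘ e, z ∘ e⟩, ⟨⟨fun i ↦ (hw₀ _).le, ?_⟩, ?_⟩, ?_⟩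
  · simpa only [Function.comp_apply, e.sum_comp] using hw₁
  · exact fun i _ ↦ hzs ⟨e i, rfl⟩
  · exact e.sum_comp fun i ↦ w i • z i

variable [TopologicalSpace E] [IsTopologicalAddGroup E] [ContinuousSMul ℝ E]

theorem isCompact_convexCombinations {s : Set E} (hs : IsCompact s) (k : ℕ) :
    IsCompact (convexCombinations k s) :=
  ((isCompact_stdSimplex ℝ (Fin k)).prod (isCompact_univ_pi fun _ ↦ hs)).image (by fun_prop)

theorem IsCompact.convexHull_of_finiteDimensional [FiniteDimensional ℝ E] {s : Set E}
    (hs : IsCompact s) : IsCompact (convexHull ℝ s) := by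
  rw [convexHull_eq_iUnion_convexCombinations]
  exact isCompact_iUnion fun k ↦ isCompact_convexCombinations hs k

end ConvexCombinations

theorem zero_notMem_convexHull_of_sum_ne_zero {𝕜 E : Type*} [Field 𝕜] [LinearOrder 𝕜]
    [IsStrictOrderedRing 𝕜] [AddCommGroup E] [Module 𝕜 E] {s : Set E}
    (h : ∀ k : ℕ, 1 ≤ k → ∀ x : Fin k → E, AffineIndependent 𝕜 x → (∀ i, x i ∈ s) →
      ∀ α : Fin k → 𝕜, (∀ i, 0 < α i) → ∑ i, α i • x i ≠ 0) :
    (0 : E) ∉ convexHull 𝕜 s := by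
  intro h0
  obtain ⟨ι, _, z, w, hzs, hz, hw₀, hw₁, hsum⟩ := eq_pos_convex_span_of_mem_convexHull h0
  have : Nonempty ι := by
    by_contra!
    simp at hw₁
  let e := (Fintype.equivFin ι).symm
  refine h _ Fintype.card_pos (z ∘ e) (hz.comp_embedding e.toEmbedding) (fun i ↦ hzs ⟨e i, rfl⟩)
    (w ∘ e) (fun i ↦ hw₀ (e i)) ?_
  exact (e.sum_comp fun i ↦ w i • z i).trans hsum

theorem exists_forall_inner_pos_of_zero_notMem {E : Type*} [NormedAddCommGroup E]
    [InnerProductSpace ℝ E] [CompleteSpace E] {t : Set E} (ht : Convex ℝ t) (htc : IsClosed t)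
    (h0 : (0 : E) ∉ t) : ∃ u : E, ∀ x ∈ t, 0 < ⟪x, u⟫ := by
  obtain ⟨f, c, hf0, hf⟩ := geometric_hahn_banach_point_closed ht htc h0
  refine ⟨(InnerProductSpace.toDual ℝ E).symm f, fun x hx ↦ ?_⟩
  rw [real_inner_comm, InnerProductSpace.toDual_symm_apply]
  exact (map_zero f ▸ hf0).trans (hf x hx)

theorem stmt14_general {n : ℕ}
    (C : Set (EuclideanSpace ℝ (Fin n)))
    (hcpt : IsCompact C)
    (hind : ∀ (k : ℕ), 1 ≤ k → ∀ x : Fin k → EuclideanSpace ℝ (Fin n),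
      AffineIndependent ℝ x → (∀ i, x i ∈ C) →
      ∀ α : Fin k → ℝ, (∀ i, 0 < α i) → ∑ i, α i • x i ≠ 0) :
    ∃ u₀ : EuclideanSpace ℝ (Fin n), ∀ x ∈ C, 0 < ⟪x, u₀⟫ := by
  obtain ⟨u, hu⟩ := exists_forall_inner_pos_of_zero_notMem (convex_convexHull ℝ C)
    hcpt.convexHull_of_finiteDimensional.isClosed (zero_notMem_convexHull_of_sum_ne_zero hind)
  exact ⟨u, fun x hx ↦ hu x (subset_convexHull ℝ C hx)⟩

theorem stmt14 {n : ℕ} (hn : 2 ≤ n)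
    (C : Set (EuclideanSpace ℝ (Fin n))) (hne : C.Nonempty)
    (h0 : (0 : EuclideanSpace ℝ (Fin n)) ∉ C) (hcpt : IsCompact C)
    (hind : ∀ (k : ℕ), 1 ≤ k → ∀ x : Fin k → EuclideanSpace ℝ (Fin n),
      AffineIndependent ℝ x → (∀ i, x i ∈ C) →
      ∀ α : Fin k → ℝ, (∀ i, 0 < α i) → ∑ i, α i • x i ≠ 0) :
    ∃ u₀ : EuclideanSpace ℝ (Fin n), ∀ x ∈ C, 0 < ⟪x, u₀⟫ :=
  stmt14_general C hcpt hind
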